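/- arXiv:1812.08958 — 2 statements merged into one kernel-verified Lean document; each statement's English description precedes it below -/
import Mathlib

section
/- Let G = (V,E) be a finite undirected graph, φ ∈ (0,1), and A ⊆ V. Consider the flow problem on G[A] with source function Δ(u) = (2/φ)·|E_G({u}, V∖A)| for u ∈ A, sink capacity deg_G(v) at each v ∈ A, and capacity 2/φ on each edge of G[A]. Suppose A is a nearly φ expander in G, and suppose there exists S ⊆ A with 0 < vol_G(S) ≤ vol_G(A)/2 and |E_G(S, A∖S)| ≤ (φ/6)·vol_G(S) (i.e., G{A} is not a φ/6 expander). Then this flow problem admits no feasible routing. -/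
/-!
STATEMENT 5 (Proposition 3.2 — infeasibility certificate):
Let `G = (V,E)`, `φ ∈ (0,1)`, `A ⊆ V`. Consider the flow problem on `G[A]` with
source `Δ(u) = (2/φ)·|E_G({u}, V∖A)|`, sink capacity `deg_G(v)` at each `v ∈ A`,
and capacity `2/φ` on each edge of `G[A]`. If `A` is a nearly `φ` expander in `G`
but `G{A}` is not a `φ/6` expander (witnessed by a sparse cut `S`), then the flow
problem admits no feasible routing.
-/

open Finset

noncomputable section
open scoped Classical

/-- `|E_G(S,T)|`: the number of edges of `G` with one endpoint in `S` and the other in `T`. -/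
def eCount {V : Type*} [Fintype V] [DecidableEq V] (G : SimpleGraph V) (S T : Finset V) : ℕ :=
  ((S ×ˢ T).filter fun p => G.Adj p.1 p.2).card

/-- `vol_G(S) = ∑_{v ∈ S} deg_G(v)`. -/
def vol {V : Type*} [Fintype V] [DecidableEq V] (G : SimpleGraph V) (S : Finset V) : ℕ :=
  ∑ v ∈ S, G.degree v

/-- `f` is a feasible routing for the flow problem on `G[A]` with source function `Δ`,
sink capacity `deg_G(v)` at each `v ∈ A`, and capacity `2/φ` on each edge of `G[A]`. -/
def FeasibleRouting {V : Type*} [Fintype V] [DecidableEq V] (G : SimpleGraph V) (φ : ℝ)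
    (A : Finset V) (Δ : V → ℝ) (f : V → V → ℝ) : Prop :=
  -- f is a routing: skew-symmetric, supported on edges of G[A]
  (∀ u v, f u v = - f v u) ∧
  (∀ u v, ¬(u ∈ A ∧ v ∈ A ∧ G.Adj u v) → f u v = 0) ∧
  -- edge capacities
  (∀ u ∈ A, ∀ v ∈ A, G.Adj u v → |f u v| ≤ 2 / φ) ∧
  -- net mass routed away from v is at most its initial mass
  (∀ v ∈ A, ∑ u ∈ A, f v u ≤ Δ v) ∧
  -- sink capacities: f(v) = Δ(v) + ∑_u f(u,v) ≤ deg(v)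
  (∀ v ∈ A, Δ v + ∑ u ∈ A, f u v ≤ (G.degree v : ℝ))


lemma eCount_eq_sum {V : Type*} [Fintype V] [DecidableEq V] (G : SimpleGraph V)
    (S T : Finset V) :
    eCount G S T = ∑ u ∈ S, ∑ v ∈ T, (if G.Adj u v then 1 else 0) := by
  rw [eCount, Finset.card_filter, Finset.sum_product]

lemma eCount_comm {V : Type*} [Fintype V] [DecidableEq V] (G : SimpleGraph V)
    (S T : Finset V) : eCount G S T = eCount G T S := by
  rw [eCount_eq_sum, eCount_eq_sum, Finset.sum_comm]
  refine Finset.sum_congr rfl fun v _ => Finset.sum_congr rfl fun u _ => ?_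
  simp [SimpleGraph.adj_comm]

lemma eCount_union {V : Type*} [Fintype V] [DecidableEq V] (G : SimpleGraph V)
    (S T₁ T₂ : Finset V) (h : Disjoint T₁ T₂) :
    eCount G S (T₁ ∪ T₂) = eCount G S T₁ + eCount G S T₂ := by
  rw [eCount_eq_sum, eCount_eq_sum, eCount_eq_sum, ← Finset.sum_add_distrib]
  exact Finset.sum_congr rfl fun u _ => Finset.sum_union h

lemma eCount_singleton_sum {V : Type*} [Fintype V] [DecidableEq V] (G : SimpleGraph V)
    (S T : Finset V) : ∑ u ∈ S, eCount G {u} T = eCount G S T := by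
  rw [eCount_eq_sum]
  exact Finset.sum_congr rfl fun u _ => by rw [eCount_eq_sum, Finset.sum_singleton]

lemma sum_ite_eCount {V : Type*} [Fintype V] [DecidableEq V] (G : SimpleGraph V)
    (S T : Finset V) (c : ℝ) :
    ∑ u ∈ S, ∑ v ∈ T, (if G.Adj u v then c else 0) = c * (eCount G S T : ℝ) := by
  rw [eCount_eq_sum]
  push_cast
  rw [Finset.mul_sum]
  refine Finset.sum_congr rfl fun u _ => ?_
  rw [Finset.mul_sum]
  refine Finset.sum_congr rfl fun v _ => ?_
  split <;> simp

theorem no_feasible_routing_of_sparse_cut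
    {V : Type*} [Fintype V] [DecidableEq V] (G : SimpleGraph V) (φ : ℝ) (A : Finset V)
    (hφ0 : 0 < φ) (hφ1 : φ < 1)
    -- A is a nearly φ expander in G
    (hnear : ∀ S ⊆ A, (vol G S : ℝ) ≤ (vol G A : ℝ) / 2 →
      φ * (vol G S : ℝ) ≤ (eCount G S Sᶜ : ℝ))
    -- G{A} is not a φ/6 expander, witnessed by S
    (S : Finset V) (hSA : S ⊆ A) (hpos : 0 < vol G S)
    (hhalf : (vol G S : ℝ) ≤ (vol G A : ℝ) / 2)
    (hsparse : (eCount G S (A \ S) : ℝ) ≤ (φ / 6) * (vol G S : ℝ)) :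
    ¬ ∃ f : V → V → ℝ,
        FeasibleRouting G φ A (fun u => (2 / φ) * (eCount G {u} Aᶜ : ℝ)) f := by
  rintro ⟨f, hskew, hsupp, hcap, hnet, hsink⟩
  set vS : ℝ := (vol G S : ℝ) with hvS
  have hvSpos : 0 < vS := by rw [hvS]; exact_mod_cast hpos
  set C1 : ℝ := (eCount G S (A \ S) : ℝ) with hC1
  set C2 : ℝ := (eCount G S Aᶜ : ℝ) with hC2
  -- split of the complement
  have hcompl : (A \ S) ∪ Aᶜ = Sᶜ := by
    ext v
    simp only [Finset.mem_union, Finset.mem_sdiff, Finset.mem_compl]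
    constructor
    · rintro (⟨_, hv⟩ | hv)
      · exact hv
      · exact fun hvS => hv (hSA hvS)
    · intro hv
      by_cases hA : v ∈ A
      · exact Or.inl ⟨hA, hv⟩
      · exact Or.inr hA
  have hdisj : Disjoint (A \ S) Aᶜ := by
    refine Finset.disjoint_left.mpr fun v hv hv' => ?_
    exact (Finset.mem_compl.mp hv') (Finset.mem_sdiff.mp hv).1
  have hsplit : (eCount G S Sᶜ : ℝ) = C1 + C2 := by
    rw [← hcompl, eCount_union G S _ _ hdisj]; push_cast; ring
  have hexp : φ * vS ≤ C1 + C2 := by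
    rw [← hsplit]; exact hnear S hSA hhalf
  -- sum the sink constraints over S
  have hsinkS : ∑ v ∈ S, ((2 / φ) * (eCount G {v} Aᶜ : ℝ) + ∑ u ∈ A, f u v) ≤ vS := by
    rw [hvS, vol, Nat.cast_sum]
    exact Finset.sum_le_sum fun v hv => hsink v (hSA hv)
  have hΔsum : ∑ v ∈ S, (2 / φ) * (eCount G {v} Aᶜ : ℝ) = (2 / φ) * C2 := by
    rw [← Finset.mul_sum, hC2, ← eCount_singleton_sum G S Aᶜ]
    push_cast
    ring
  -- internal flow cancels
  have hzero : ∑ v ∈ S, ∑ u ∈ S, f u v = 0 := by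
    have h1 : ∑ v ∈ S, ∑ u ∈ S, f u v = - ∑ v ∈ S, ∑ u ∈ S, f u v := by
      calc ∑ v ∈ S, ∑ u ∈ S, f u v = ∑ u ∈ S, ∑ v ∈ S, f u v := Finset.sum_comm
        _ = ∑ u ∈ S, ∑ v ∈ S, (- f v u) :=
            Finset.sum_congr rfl fun u _ => Finset.sum_congr rfl fun v _ => hskew u v
        _ = - ∑ v ∈ S, ∑ u ∈ S, f u v := by
            rw [← Finset.sum_neg_distrib]
            exact Finset.sum_congr rfl fun u _ => by rw [Finset.sum_neg_distrib]
    linarith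
  have hAsplit : ∀ v ∈ S, ∑ u ∈ A, f u v = ∑ u ∈ S, f u v + ∑ u ∈ A \ S, f u v := by
    intro v _
    rw [add_comm, Finset.sum_sdiff hSA]
  have hF : ∑ v ∈ S, ∑ u ∈ A, f u v = ∑ v ∈ S, ∑ u ∈ A \ S, f u v := by
    rw [Finset.sum_congr rfl hAsplit, Finset.sum_add_distrib, hzero, zero_add]
  -- lower bound on cross flow
  have hcross : -(2 / φ) * C1 ≤ ∑ v ∈ S, ∑ u ∈ A \ S, f u v := by
    have hb : ∀ v ∈ S, ∀ u ∈ A \ S, (if G.Adj u v then -(2 / φ) else 0) ≤ f u v := by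
      intro v hv u hu
      by_cases hadj : G.Adj u v
      · simp only [hadj, if_true]
        have := hcap u ((Finset.mem_sdiff.mp hu).1) v (hSA hv) hadj
        have := abs_le.mp this
        linarith [this.1]
      · simp only [hadj, if_false]
        rw [hsupp u v (by tauto)]
    have : ∑ v ∈ S, ∑ u ∈ A \ S, (if G.Adj u v then -(2 / φ) else 0)
        ≤ ∑ v ∈ S, ∑ u ∈ A \ S, f u v :=
      Finset.sum_le_sum fun v hv => Finset.sum_le_sum fun u hu => hb v hv u hu
    refine le_trans (le_of_eq ?_) this
    rw [Finset.sum_comm, sum_ite_eCount, eCount_comm, ← hC1]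
  have hmain : (2 / φ) * C2 + ∑ v ∈ S, ∑ u ∈ A \ S, f u v ≤ vS := by
    rw [← hF]
    calc (2 / φ) * C2 + ∑ v ∈ S, ∑ u ∈ A, f u v
        = ∑ v ∈ S, ((2 / φ) * (eCount G {v} Aᶜ : ℝ) + ∑ u ∈ A, f u v) := by
          rw [Finset.sum_add_distrib, hΔsum]
      _ ≤ vS := hsinkS
  -- multiply through by φ to clear denominators
  set F : ℝ := ∑ v ∈ S, ∑ u ∈ A \ S, f u v
  have hφne : φ ≠ 0 := ne_of_gt hφ0
  have h1' : 2 * C2 + φ * F ≤ φ * vS := by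
    have := mul_le_mul_of_nonneg_left hmain hφ0.le
    have e : φ * ((2 / φ) * C2 + F) = 2 * C2 + φ * F := by field_simp
    linarith [e ▸ this]
  have h2' : -(2 * C1) ≤ φ * F := by
    have := mul_le_mul_of_nonneg_left hcross hφ0.le
    have e : φ * (-(2 / φ) * C1) = -(2 * C1) := by field_simp
    linarith [e ▸ this]
  have hC1b : 6 * C1 ≤ φ * vS := by linarith [hsparse]
  have hprod : 0 < φ * vS := mul_pos hφ0 hvSpos
  linarith
end
end

section
/- Let G = (V,E) be a finite undirected graph, φ ∈ (0,1), and A ⊆ V with Ā = V∖A. If A is a nearly φ expander in G and |E_G(A,Ā)| ≤ φ·vol_G(A)/10, then there exists A' ⊆ A such that Φ_{G{A'}} ≥ φ/6, vol_G(A') ≥ vol_G(A) − 2·|E_G(A,Ā)|/φ, and |E_G(A', V∖A')| ≤ |E_G(A,Ā)|. -/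
/-!
STATEMENT 8 (slow trimming via exact max flow — stronger constants):
Let `G = (V,E)`, `φ ∈ (0,1)`, `A ⊆ V`. If `A` is a nearly `φ` expander in `G`
and `|E_G(A,Ā)| ≤ φ·vol_G(A)/10`, then there is `A' ⊆ A` with `Φ_{G{A'}} ≥ φ/6`,
`vol_G(A') ≥ vol_G(A) − 2·|E_G(A,Ā)|/φ`, and `|E_G(A', V∖A')| ≤ |E_G(A,Ā)|`.
-/

open Finset

noncomputable section
open scoped Classical

section Helpers
variable {V : Type*} [Fintype V] [DecidableEq V] (G : SimpleGraph V)

lemma eCount_symm (S T : Finset V) : eCount G S T = eCount G T S := by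
  unfold eCount
  refine Finset.card_nbij' Prod.swap Prod.swap ?_ ?_ ?_ ?_ <;>
    simp +contextual [Finset.mem_filter, Finset.mem_product, SimpleGraph.adj_comm, and_comm,
      Prod.swap, Set.MapsTo, Set.LeftInvOn, Set.RightInvOn, Set.mem_setOf_eq]

lemma eCount_union_right (S T₁ T₂ : Finset V) (h : Disjoint T₁ T₂) :
    eCount G S (T₁ ∪ T₂) = eCount G S T₁ + eCount G S T₂ := by
  unfold eCount
  rw [Finset.product_union, Finset.filter_union]
  apply Finset.card_union_of_disjoint
  rw [Finset.disjoint_left]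
  rintro p hp1 hp2
  simp only [Finset.mem_filter, Finset.mem_product] at hp1 hp2
  exact (Finset.disjoint_left.mp h hp1.1.2) hp2.1.2

lemma eCount_mono_right (S : Finset V) {T T' : Finset V} (h : T ⊆ T') :
    eCount G S T ≤ eCount G S T' := by
  unfold eCount
  exact Finset.card_le_card (Finset.filter_subset_filter _
    (Finset.product_subset_product (Finset.Subset.refl _) h))

lemma eCount_mono_left {S S' : Finset V} (T : Finset V) (h : S ⊆ S') :
    eCount G S T ≤ eCount G S' T := by
  rw [eCount_symm, eCount_symm G S' T]; exact eCount_mono_right G T h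

lemma compl_eq_sdiff_union {S B : Finset V} (h : S ⊆ B) : Sᶜ = (B \ S) ∪ Bᶜ := by
  ext v
  simp only [Finset.mem_compl, Finset.mem_union, Finset.mem_sdiff]
  constructor
  · intro hv
    by_cases hb : v ∈ B
    · exact Or.inl ⟨hb, hv⟩
    · exact Or.inr hb
  · rintro (⟨_, hv⟩ | hv)
    · exact hv
    · exact fun hs => hv (h hs)

lemma eCount_compl_split {S B : Finset V} (h : S ⊆ B) :
    eCount G S Sᶜ = eCount G S (B \ S) + eCount G S Bᶜ := by
  rw [compl_eq_sdiff_union h, eCount_union_right]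
  exact Finset.disjoint_left.mpr fun v hv => by
    simp only [Finset.mem_compl]
    exact fun hc => hc (Finset.mem_sdiff.mp hv).1

lemma vol_union {S T : Finset V} (h : Disjoint S T) :
    vol G (S ∪ T) = vol G S + vol G T := Finset.sum_union h

lemma vol_sdiff_add {B A : Finset V} (h : B ⊆ A) :
    vol G (A \ B) + vol G B = vol G A := Finset.sum_sdiff h

lemma vol_mono {S T : Finset V} (h : S ⊆ T) : vol G S ≤ vol G T :=
  Finset.sum_le_sum_of_subset h


lemma eCount_union_left (S₁ S₂ T : Finset V) (h : Disjoint S₁ S₂) :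
    eCount G (S₁ ∪ S₂) T = eCount G S₁ T + eCount G S₂ T := by
  rw [eCount_symm, eCount_union_right G T S₁ S₂ h, eCount_symm G T, eCount_symm G T]

lemma trim_aux (φ : ℝ) (A : Finset V) (hφ0 : 0 < φ)
    (hnear : ∀ S ⊆ A, (vol G S : ℝ) ≤ (vol G A : ℝ) / 2 →
      φ * (vol G S : ℝ) ≤ (eCount G S Sᶜ : ℝ))
    (hcut : (eCount G A Aᶜ : ℝ) ≤ φ * (vol G A : ℝ) / 10) :
    ∀ n (B : Finset V), B.card ≤ n → B ⊆ A →
    (eCount G (A \ B) B : ℝ) ≤ φ / 6 * (vol G (A \ B) : ℝ) →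
    (eCount G B Bᶜ : ℝ) ≤ (eCount G A Aᶜ : ℝ) →
    (vol G (A \ B) : ℝ) ≤ (vol G A : ℝ) / 2 →
    ∃ A' ⊆ B,
      (∀ S ⊆ A', (vol G S : ℝ) ≤ (vol G A' : ℝ) / 2 →
        φ / 6 * (vol G S : ℝ) ≤ (eCount G S (A' \ S) : ℝ)) ∧
      (eCount G (A \ A') A' : ℝ) ≤ φ / 6 * (vol G (A \ A') : ℝ) ∧
      (eCount G A' A'ᶜ : ℝ) ≤ (eCount G A Aᶜ : ℝ) ∧
      (vol G (A \ A') : ℝ) ≤ (vol G A : ℝ) / 2 := by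
  intro n
  induction n with
  | zero =>
    intro B hcard hBA h1 h2 h3
    have hB : B = ∅ := Finset.card_eq_zero.mp (Nat.le_zero.mp hcard)
    refine ⟨B, Finset.Subset.refl _, ?_, h1, h2, h3⟩
    intro S hS _
    have : S = ∅ := Finset.subset_empty.mp (hB ▸ hS)
    subst this
    simp [vol, eCount]
  | succ n ih =>
    intro B hcard hBA h1 h2 h3
    by_cases hgood : ∀ S ⊆ B, (vol G S : ℝ) ≤ (vol G B : ℝ) / 2 →
        φ / 6 * (vol G S : ℝ) ≤ (eCount G S (B \ S) : ℝ)
    · exact ⟨B, Finset.Subset.refl _, hgood, h1, h2, h3⟩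
    · push_neg at hgood
      obtain ⟨S, hSB, hvolS, hbad⟩ := hgood
      -- basic facts
      have hSA : S ⊆ A := hSB.trans hBA
      have hecnn : (0:ℝ) ≤ (eCount G S (B \ S) : ℝ) := Nat.cast_nonneg _
      have hvolSpos : (0:ℝ) < (vol G S : ℝ) := by nlinarith
      have hSne : S.Nonempty := by
        rcases Finset.eq_empty_or_nonempty S with rfl | h
        · simp [vol] at hvolSpos
        · exact h
      have hvolBA : (vol G B : ℝ) ≤ (vol G A : ℝ) := by
        exact_mod_cast vol_mono G hBA
      have hvolS2 : (vol G S : ℝ) ≤ (vol G A : ℝ) / 2 := by linarith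
      have hexp : φ * (vol G S : ℝ) ≤ (eCount G S Sᶜ : ℝ) := hnear S hSA hvolS2
      have hsplitS : (eCount G S Sᶜ : ℝ) = (eCount G S (B \ S) : ℝ) + (eCount G S Bᶜ : ℝ) := by
        rw [eCount_compl_split G hSB]; push_cast; ring
      have hkey : (5 * φ / 6) * (vol G S : ℝ) ≤ (eCount G S Bᶜ : ℝ) := by
        nlinarith
      -- set B' = B \ S
      set B' := B \ S with hB'
      have hB'B : B' ⊆ B := Finset.sdiff_subset
      have hB'A : B' ⊆ A := hB'B.trans hBA
      have hcard' : B'.card ≤ n := by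
        have : B' ⊂ B := Finset.sdiff_ssubset hSB hSne
        have := Finset.card_lt_card this
        omega
      -- A \ B' = (A \ B) ∪ S
      have hD' : A \ B' = (A \ B) ∪ S := by
        rw [hB']
        ext v
        simp only [Finset.mem_sdiff, Finset.mem_union]
        constructor
        · rintro ⟨hvA, hv⟩
          by_cases hvB : v ∈ B
          · right
            by_contra hvS
            exact hv ⟨hvB, hvS⟩
          · left; exact ⟨hvA, hvB⟩
        · rintro (⟨hvA, hvB⟩ | hvS)
          · exact ⟨hvA, fun h => hvB h.1⟩
          · exact ⟨hSA hvS, fun h => h.2 hvS⟩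
      have hdisjDS : Disjoint (A \ B) S :=
        Finset.disjoint_left.mpr fun v hv hvS => (Finset.mem_sdiff.mp hv).2 (hSB hvS)
      have hvolD' : (vol G (A \ B') : ℝ) = (vol G (A \ B) : ℝ) + (vol G S : ℝ) := by
        rw [hD', vol_union G hdisjDS]; push_cast; ring
      -- I1 for B'
      have hI1' : (eCount G (A \ B') B' : ℝ) ≤ φ / 6 * (vol G (A \ B') : ℝ) := by
        have hsum : eCount G (A \ B') B' = eCount G (A \ B) B' + eCount G S B' := by
          rw [hD', eCount_union_left G _ _ _ hdisjDS]
        have hm : eCount G (A \ B) B' ≤ eCount G (A \ B) B := eCount_mono_right G _ hB'B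
        have hmr : ((eCount G (A \ B) B' : ℕ) : ℝ) ≤ ((eCount G (A \ B) B : ℕ) : ℝ) := by
          exact_mod_cast hm
        rw [hvolD']
        have hsumR : (eCount G (A \ B') B' : ℝ)
            = (eCount G (A \ B) B' : ℝ) + (eCount G S B' : ℝ) := by
          exact_mod_cast congrArg (Nat.cast : ℕ → ℝ) hsum
        rw [hsumR]
        have := hbad.le
        linarith
      -- I2 for B'
      have hBsplit : S ∪ B' = B := Finset.union_sdiff_of_subset hSB
      have hdisjSB' : Disjoint S B' :=
        Finset.disjoint_left.mpr fun v hv hvp => (Finset.mem_sdiff.mp hvp).2 hv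
      have hI2' : (eCount G B' B'ᶜ : ℝ) ≤ (eCount G A Aᶜ : ℝ) := by
        have hcutB : eCount G B Bᶜ = eCount G S Bᶜ + eCount G B' Bᶜ := by
          calc eCount G B Bᶜ = eCount G (S ∪ B') Bᶜ := by rw [hBsplit]
            _ = eCount G S Bᶜ + eCount G B' Bᶜ := eCount_union_left G _ _ _ hdisjSB'
        have hcutB' : eCount G B' B'ᶜ = eCount G B' S + eCount G B' Bᶜ := by
          have hBB' : B \ B' = S := by
            rw [hB', Finset.sdiff_sdiff_self_left, Finset.inter_eq_right.mpr hSB]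
          rw [eCount_compl_split G hB'B, hBB']
        have h5 : (eCount G B' S : ℝ) ≤ (eCount G S Bᶜ : ℝ) := by
          rw [eCount_symm]
          have hmul : (0:ℝ) ≤ φ * (vol G S : ℝ) := le_of_lt (mul_pos hφ0 hvolSpos)
          linarith [hbad.le, hkey]
        have e1 : (eCount G B Bᶜ : ℝ) = (eCount G S Bᶜ : ℝ) + (eCount G B' Bᶜ : ℝ) := by
          exact_mod_cast congrArg (Nat.cast : ℕ → ℝ) hcutB
        have e2 : (eCount G B' B'ᶜ : ℝ) = (eCount G B' S : ℝ) + (eCount G B' Bᶜ : ℝ) := by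
          exact_mod_cast congrArg (Nat.cast : ℕ → ℝ) hcutB'
        linarith
      -- I3 for B'
      have hI3' : (vol G (A \ B') : ℝ) ≤ (vol G A : ℝ) / 2 := by
        by_contra hcon
        push_neg at hcon
        have hvolDA : (vol G (A \ B') : ℝ) ≤ (vol G A : ℝ) := by
          exact_mod_cast vol_mono G (Finset.sdiff_subset)
        have hApos : (0:ℝ) < (vol G A : ℝ) := by linarith
        -- vol(A\B) ≤ 3/25 vol A
        have hDexp : φ * (vol G (A \ B) : ℝ) ≤ (eCount G (A \ B) (A \ B)ᶜ : ℝ) :=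
          hnear _ Finset.sdiff_subset h3
        have hDsplit : eCount G (A \ B) (A \ B)ᶜ = eCount G (A \ B) B + eCount G (A \ B) Aᶜ := by
          have h := eCount_compl_split G (Finset.sdiff_subset : A \ B ⊆ A)
          rwa [Finset.sdiff_sdiff_self_left, Finset.inter_eq_right.mpr hBA] at h
        have hDA : (eCount G (A \ B) Aᶜ : ℝ) ≤ (eCount G A Aᶜ : ℝ) := by
          exact_mod_cast eCount_mono_left G Aᶜ (Finset.sdiff_subset : A \ B ⊆ A)
        have hDsplitR : (eCount G (A \ B) (A \ B)ᶜ : ℝ)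
            = (eCount G (A \ B) B : ℝ) + (eCount G (A \ B) Aᶜ : ℝ) := by
          exact_mod_cast congrArg (Nat.cast : ℕ → ℝ) hDsplit
        have hstep : φ * (vol G (A \ B) : ℝ) ≤ φ * (3 / 25 * (vol G A : ℝ)) := by
          linarith
        have hDbound : (vol G (A \ B) : ℝ) ≤ 3 / 25 * (vol G A : ℝ) :=
          le_of_mul_le_mul_left hstep hφ0
        -- vol B' small
        have hvolB'sum : (vol G (A \ B') : ℝ) + (vol G B' : ℝ) = (vol G A : ℝ) := by
          exact_mod_cast vol_sdiff_add G hB'A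
        have hvolB'lt : (vol G B' : ℝ) ≤ (vol G A : ℝ) / 2 := by linarith
        have hB'exp : φ * (vol G B' : ℝ) ≤ (eCount G B' B'ᶜ : ℝ) := hnear _ hB'A hvolB'lt
        have hstep2 : φ * (vol G B' : ℝ) ≤ φ * ((vol G A : ℝ) / 10) := by linarith
        have hB'small : (vol G B' : ℝ) ≤ (vol G A : ℝ) / 10 :=
          le_of_mul_le_mul_left hstep2 hφ0
        -- contradiction: vol(A\B') ≥ 9/10 vol A but also ≤ 3/25 + 1/2 < 9/10
        linarith
      obtain ⟨A', hA'B', hrest⟩ := ih B' hcard' hB'A hI1' hI2' hI3'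
      exact ⟨A', hA'B'.trans hB'B, hrest⟩

end Helpers

theorem slow_trimming
    {V : Type*} [Fintype V] [DecidableEq V] (G : SimpleGraph V) (φ : ℝ) (A : Finset V)
    (hφ0 : 0 < φ) (hφ1 : φ < 1)
    -- A is a nearly φ expander in G
    (hnear : ∀ S ⊆ A, (vol G S : ℝ) ≤ (vol G A : ℝ) / 2 →
      φ * (vol G S : ℝ) ≤ (eCount G S Sᶜ : ℝ))
    -- |E(A, Ā)| ≤ φ·vol(A)/10
    (hcut : (eCount G A Aᶜ : ℝ) ≤ φ * (vol G A : ℝ) / 10) :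
    ∃ A' ⊆ A,
      -- Φ_{G{A'}} ≥ φ/6
      (∀ S ⊆ A', (vol G S : ℝ) ≤ (vol G A' : ℝ) / 2 →
        (φ / 6) * (vol G S : ℝ) ≤ (eCount G S (A' \ S) : ℝ)) ∧
      -- vol(A') ≥ vol(A) − 2·|E(A,Ā)|/φ
      (vol G A : ℝ) - 2 * (eCount G A Aᶜ : ℝ) / φ ≤ (vol G A' : ℝ) ∧
      -- |E(A', V∖A')| ≤ |E(A,Ā)|
      (eCount G A' A'ᶜ : ℝ) ≤ (eCount G A Aᶜ : ℝ) := by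
  obtain ⟨A', hA'A, hgood, hI1, hI2, hI3⟩ :=
    trim_aux G φ A hφ0 hnear hcut A.card A le_rfl (Finset.Subset.refl _)
      (by simp [eCount, vol]) le_rfl
      (by
        simp only [Finset.sdiff_self, vol, Finset.sum_empty, Nat.cast_zero]
        positivity)
  refine ⟨A', hA'A, hgood, ?_, hI2⟩
  -- volume bound
  have hDexp : φ * (vol G (A \ A') : ℝ) ≤ (eCount G (A \ A') (A \ A')ᶜ : ℝ) :=
    hnear _ Finset.sdiff_subset hI3
  have hDsplit : eCount G (A \ A') (A \ A')ᶜ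
      = eCount G (A \ A') A' + eCount G (A \ A') Aᶜ := by
    have h := eCount_compl_split G (Finset.sdiff_subset : A \ A' ⊆ A)
    rwa [Finset.sdiff_sdiff_self_left, Finset.inter_eq_right.mpr hA'A] at h
  have hDsplitR : (eCount G (A \ A') (A \ A')ᶜ : ℝ)
      = (eCount G (A \ A') A' : ℝ) + (eCount G (A \ A') Aᶜ : ℝ) := by
    exact_mod_cast congrArg (Nat.cast : ℕ → ℝ) hDsplit
  have hDA : (eCount G (A \ A') Aᶜ : ℝ) ≤ (eCount G A Aᶜ : ℝ) := by
    exact_mod_cast eCount_mono_left G Aᶜ (Finset.sdiff_subset : A \ A' ⊆ A)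
  have hsum : (vol G (A \ A') : ℝ) + (vol G A' : ℝ) = (vol G A : ℝ) := by
    exact_mod_cast vol_sdiff_add G hA'A
  have hDle : (vol G (A \ A') : ℝ) ≤ 2 * (eCount G A Aᶜ : ℝ) / φ := by
    rw [le_div_iff₀ hφ0]
    linarith
  linarith
end
end
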